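/- arXiv:2507.04007 — 6 statements merged into one kernel-verified Lean document; each statement's English description precedes it below -/
import Mathlib

section
/- For all positive integers m, n, r, s, one has N(m,n)^(r·s) ≤ N(r·m + r − 1, s·n + s − 1). (Splicing method (2): r·s disjoint m×n grids assembled in r rows and s columns, separated by rows and columns of unselected vertices, yield independent sets of the (rm+r−1)×(sn+s−1) grid graph, and this assembly map is injective.) -/
open SimpleGraph Filter Real Topology

open Classical in
/-- Number of independent sets (vertex subsets with no two adjacent vertices,
the empty set included) of a finite simple graph. -/
noncomputable def numIndep {V : Type*} [Fintype V] (G : SimpleGraph V) : ℕ :=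
  (Finset.univ.filter fun s : Finset V => ∀ u ∈ s, ∀ v ∈ s, ¬ G.Adj u v).card

/-- `N(m,n)`: number of independent sets of the `m × n` grid graph, the box
product of the path graphs on `m` and `n` vertices. -/
noncomputable def gridN (m n : ℕ) : ℕ :=
  numIndep (pathGraph m □ pathGraph n)

/-!
The disjoint union of `r * s` copies of the `m × n` grid, i.e. `⊥ □ (Pₘ □ Pₙ)` on
`(Fin r × Fin s) × (Fin m × Fin n)`, has at least `N(m,n) ^ (r * s)` independent sets, one for
each choice of an independent set in every copy. Placing copy `(i, j)` at offset
`(i * (m + 1), j * (n + 1))` embeds it into the big grid so that the only edges between image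
vertices are the images of edges of the copies: the row and column left free between two blocks
separate them. Such an embedding pushes independent sets forward injectively.
-/

lemma numIndep_le_of_comap_le {V W : Type*} [Fintype V] [Fintype W] {G : SimpleGraph V}
    {H : SimpleGraph W} (f : V ↪ W) (hf : H.comap f ≤ G) : numIndep G ≤ numIndep H := by
  unfold numIndep
  refine Finset.card_le_card_of_injOn (fun s => s.map f) ?_ (Finset.map_injective f).injOn
  intro s hs
  simp only [Finset.coe_filter, Finset.mem_univ, true_and, Set.mem_ofPred_eq,
    Finset.mem_map] at hs ⊢
  rintro _ ⟨x, hx, rfl⟩ _ ⟨y, hy, rfl⟩ hxy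
  exact hs x hx y hy (hf hxy)

lemma pow_card_le_numIndep_bot_boxProd {ι V : Type*} [Fintype ι] [Fintype V]
    (G : SimpleGraph V) : numIndep G ^ Fintype.card ι ≤ numIndep ((⊥ : SimpleGraph ι) □ G) := by
  classical
  unfold numIndep
  rw [← Finset.card_univ, ← Finset.prod_const, ← Fintype.card_piFinset]
  refine Finset.card_le_card_of_injOn
    (fun g => Finset.univ.filter fun p : ι × V => p.2 ∈ g p.1) ?_ ?_
  · intro g hg
    simp only [Finset.coe_filter, Finset.mem_univ, true_and, Set.mem_ofPred_eq,
      Fintype.coe_piFinset, Set.mem_pi, Set.mem_univ, forall_const] at hg ⊢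
    rintro ⟨i, x⟩ hx ⟨j, y⟩ hy hxy
    obtain ⟨hadj, rfl⟩ : G.Adj x y ∧ i = j := by simpa [boxProd_adj] using hxy
    exact hg i x (by simpa using hx) y (by simpa using hy) hadj
  · intro g _ g' _ h
    ext i x
    simpa using congrArg (⟨i, x⟩ ∈ ·) h

lemma boxProd_comap_prodMap_le {α β α' β' : Type*} {G₁ : SimpleGraph α} {G₂ : SimpleGraph β}
    {H₁ : SimpleGraph α'} {H₂ : SimpleGraph β'} (f : α ↪ α') (g : β ↪ β')
    (hf : H₁.comap f ≤ G₁) (hg : H₂.comap g ≤ G₂) :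
    (H₁ □ H₂).comap (f.prodMap g) ≤ G₁ □ G₂ := by
  rintro ⟨a, b⟩ ⟨a', b'⟩ h
  simp only [comap_adj, Function.Embedding.coe_prodMap, Prod.map_apply, boxProd_adj] at h ⊢
  rcases h with ⟨h, hb⟩ | ⟨h, ha⟩
  · exact Or.inl ⟨hf h, g.injective hb⟩
  · exact Or.inr ⟨hg h, f.injective ha⟩

lemma bot_boxProd_comap_prodProdProdComm_le {ι κ V W : Type*} (G : SimpleGraph V)
    (H : SimpleGraph W) :
    (((⊥ : SimpleGraph ι) □ G) □ ((⊥ : SimpleGraph κ) □ H)).comap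
      (Equiv.prodProdProdComm ι κ V W) ≤ (⊥ : SimpleGraph (ι × κ)) □ (G □ H) := by
  rintro ⟨⟨i, j⟩, x, y⟩ ⟨⟨i', j'⟩, x', y'⟩ h
  simp only [comap_adj, Equiv.prodProdProdComm_apply, boxProd_adj,
    bot_adj, false_and, false_or, Prod.mk.injEq] at h ⊢
  tauto

def blockEmbedding (r m : ℕ) : Fin r × Fin m ↪ Fin (r * m + r - 1) where
  toFun p := (finProdFinEquiv (p.1, p.2.castSucc)).castLT <| by
    have hi : (m + 1) * (p.1 + 1) ≤ (m + 1) * r := Nat.mul_le_mul_left _ p.1.isLt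
    have ha := p.2.isLt
    simp only [finProdFinEquiv_apply_val, Fin.val_castSucc]
    rw [mul_add, mul_one] at hi
    rw [show r * m + r = (m + 1) * r by ring]
    omega
  inj' p q h := by
    have hval := Fin.ext_iff.mp h
    have := finProdFinEquiv.injective (a₁ := (p.1, p.2.castSucc)) (a₂ := (q.1, q.2.castSucc))
      (Fin.ext hval)
    ext <;> simp_all [Prod.ext_iff]

lemma blockEmbedding_val {r m : ℕ} (p : Fin r × Fin m) :
    (blockEmbedding r m p : ℕ) = p.2 + (m + 1) * p.1 :=
  rfl

lemma blockEmbedding_val_succ {r m : ℕ} {p q : Fin r × Fin m}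
    (h : (blockEmbedding r m p : ℕ) + 1 = blockEmbedding r m q) :
    p.1 = q.1 ∧ (p.2 : ℕ) + 1 = q.2 := by
  have : finProdFinEquiv (p.1, p.2.succ) = finProdFinEquiv (q.1, q.2.castSucc) := by
    ext
    simp only [blockEmbedding_val, finProdFinEquiv_apply_val, Fin.val_castSucc,
      Fin.val_succ] at h ⊢
    omega
  simpa [Prod.ext_iff, Fin.ext_iff] using finProdFinEquiv.injective this

lemma pathGraph_comap_blockEmbedding_le (r m : ℕ) :
    (pathGraph (r * m + r - 1)).comap (blockEmbedding r m) ≤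
      (⊥ : SimpleGraph (Fin r)) □ pathGraph m := by
  intro p q h
  rw [comap_adj, pathGraph_adj] at h
  rw [boxProd_adj, pathGraph_adj]
  rcases h with h | h
  · obtain ⟨hpq, h⟩ := blockEmbedding_val_succ h
    exact Or.inr ⟨Or.inl h, hpq⟩
  · obtain ⟨hqp, h⟩ := blockEmbedding_val_succ h
    exact Or.inr ⟨Or.inr h, hqp.symm⟩

theorem grid_indep_count_splice_general (m n r s : ℕ) :
    gridN m n ^ (r * s) ≤ gridN (r * m + r - 1) (s * n + s - 1) := by
  calc gridN m n ^ (r * s)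
      = numIndep (pathGraph m □ pathGraph n) ^ Fintype.card (Fin r × Fin s) := by simp [gridN]
    _ ≤ numIndep ((⊥ : SimpleGraph (Fin r × Fin s)) □ (pathGraph m □ pathGraph n)) :=
      pow_card_le_numIndep_bot_boxProd _
    _ ≤ numIndep (((⊥ : SimpleGraph (Fin r)) □ pathGraph m) □
          ((⊥ : SimpleGraph (Fin s)) □ pathGraph n)) :=
      numIndep_le_of_comap_le (Equiv.prodProdProdComm _ _ _ _).toEmbedding
        (bot_boxProd_comap_prodProdProdComm_le _ _)
    _ ≤ gridN (r * m + r - 1) (s * n + s - 1) :=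
      numIndep_le_of_comap_le _ (boxProd_comap_prodMap_le _ _
        (pathGraph_comap_blockEmbedding_le r m) (pathGraph_comap_blockEmbedding_le s n))

theorem grid_indep_count_splice (m n r s : ℕ) (hm : 0 < m) (hn : 0 < n)
    (hr : 0 < r) (hs : 0 < s) :
    gridN m n ^ (r * s) ≤ gridN (r * m + r - 1) (s * n + s - 1) :=
  grid_indep_count_splice_general m n r s
end

section
/- For all positive integers m, a, b, one has N(m,a) · N(m,b) ≤ N(m, a+b+1): placing an independent set of the m×a grid and an independent set of the m×b grid on either side of an inserted column of unselected vertices yields an independent set of the m×(a+b+1) grid graph, injectively. -/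
open SimpleGraph Filter Real Topology

/-!
The grid `m × (a + b + 1)` with its column `a` deleted is the disjoint union of the grids `m × a`
and `m × b`, and independent sets of a disjoint union are pairs of independent sets. Pushing
independent sets forward along an injective vertex map that pulls adjacency back into adjacency
keeps them independent, which gives the injection.
-/

section

variable {V W X : Type*} [Fintype V] [Fintype W] [Fintype X]

theorem numIndep_le_of_comap_le_s3 {G : SimpleGraph V} {K : SimpleGraph X} {f : V → X}
    (hf : Function.Injective f) (h : K.comap f ≤ G) : numIndep G ≤ numIndep K := by
  unfold numIndep
  refine Finset.card_le_card_of_injOn (Finset.map ⟨f, hf⟩) ?_ (Finset.map_injective _).injOn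
  intro s hs
  simp only [Finset.coe_filter, Finset.mem_univ, true_and, Set.mem_ofPred_eq,
    Finset.mem_map, Function.Embedding.coeFn_mk] at hs ⊢
  rintro _ ⟨u, hu, rfl⟩ _ ⟨v, hv, rfl⟩ hadj
  exact hs u hu v hv (h hadj)

theorem numIndep_sum (G : SimpleGraph V) (H : SimpleGraph W) :
    numIndep (G ⊕g H) = numIndep G * numIndep H := by
  unfold numIndep
  rw [← Finset.card_product]
  refine Finset.card_nbij' Finset.sumEquiv Finset.sumEquiv.symm ?_ ?_
    (fun s _ => Finset.sumEquiv.symm_apply_apply s) (fun s _ => Finset.sumEquiv.apply_symm_apply s)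
  · intro s hs
    simp_all
  · intro s hs
    simp_all

end

def gridSplit (m a b : ℕ) : (Fin m × Fin a) ⊕ (Fin m × Fin b) → Fin m × Fin (a + b + 1)
  | .inl (i, j) => (i, ⟨j, by omega⟩)
  | .inr (i, j) => (i, ⟨a + 1 + j, by omega⟩)

theorem gridSplit_injective (m a b : ℕ) : Function.Injective (gridSplit m a b) := by
  rintro (⟨i, j⟩ | ⟨i, j⟩) (⟨i', j'⟩ | ⟨i', j'⟩) h <;>
    simp only [gridSplit, Prod.mk.injEq, Fin.ext_iff, Nat.add_left_cancel_iff, Sum.inl.injEq,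
      Sum.inr.injEq, reduceCtorEq] at h ⊢ <;> omega

theorem comap_gridSplit_le (m a b : ℕ) :
    (pathGraph m □ pathGraph (a + b + 1)).comap (gridSplit m a b) ≤
      (pathGraph m □ pathGraph a) ⊕g (pathGraph m □ pathGraph b) := by
  rintro (⟨i, j⟩ | ⟨i, j⟩) (⟨i', j'⟩ | ⟨i', j'⟩) h <;>
    simp only [comap_adj, gridSplit, boxProd_adj, pathGraph_adj, Fin.ext_iff,
      Nat.add_left_cancel_iff, sum_adj] at h ⊢ <;> omega

theorem grid_indep_count_supermultiplicative_general (m a b : ℕ) :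
    gridN m a * gridN m b ≤ gridN m (a + b + 1) := by
  rw [gridN, gridN, ← numIndep_sum]
  exact numIndep_le_of_comap_le_s3 (gridSplit_injective m a b) (comap_gridSplit_le m a b)

theorem grid_indep_count_supermultiplicative (m a b : ℕ) (hm : 0 < m)
    (ha : 0 < a) (hb : 0 < b) :
    gridN m a * gridN m b ≤ gridN m (a + b + 1) :=
  grid_indep_count_supermultiplicative_general m a b
end

section
/- For every positive integer m there exists a real number L (denoted f(m,∞) and satisfying L > 0) such that the sequence n ↦ (ln N(m,n))/n converges to L as n → ∞. (Existence of the average free energy of the m×∞ grid strip.) -/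
open SimpleGraph Filter Real Topology

/-
Restricting an independent set of the `m × (a + b)` grid to its first `a` and its last `b`
columns loses no information, so `N(m, a + b) ≤ N(m, a) N(m, b)`: the sequence `log N(m, n)` is
subadditive and Fekete's lemma makes `log N(m, n) / n` converge. Every subset of the cells
`(0, 0), (0, 2), (0, 4), …` is independent, so `N(m, n) ≥ 2 ^ ⌈n / 2⌉` and the limit is at least
`log 2 / 2`.
-/

namespace SimpleGraph

variable {V W W' : Type*}

def boxProdMapRight (G : SimpleGraph V) {H : SimpleGraph W} {H' : SimpleGraph W'}
    (f : H →g H') : (G □ H) →g (G □ H') where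
  toFun := Prod.map id f
  map_rel' := by
    rintro ⟨a₁, b₁⟩ ⟨a₂, b₂⟩ h
    rcases boxProd_adj.1 h with ⟨ha, hb⟩ | ⟨hb, ha⟩
    · exact boxProd_adj.2 (Or.inl ⟨ha, congrArg f hb⟩)
    · exact boxProd_adj.2 (Or.inr ⟨f.map_adj hb, ha⟩)

def pathGraphCastAdd (a b : ℕ) : pathGraph a →g pathGraph (a + b) where
  toFun := Fin.castAdd b
  map_rel' h := by simpa [pathGraph_adj] using h

def pathGraphNatAdd (a b : ℕ) : pathGraph b →g pathGraph (a + b) where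
  toFun := Fin.natAdd a
  map_rel' h := by simp only [pathGraph_adj, Fin.val_natAdd] at h ⊢; omega

lemma exists_isIndepSet_pathGraph (n : ℕ) :
    ∃ s : Finset (Fin n), (pathGraph n).IsIndepSet s ∧ s.card = (n + 1) / 2 := by
  let double : Fin ((n + 1) / 2) ↪ Fin n :=
    ⟨fun k => ⟨2 * k, by omega⟩, fun k l h => Fin.ext (by simpa using h)⟩
  refine ⟨Finset.univ.map double, ?_, by simp⟩
  simp only [Finset.coe_map, Finset.coe_univ, Set.image_univ]
  rintro _ ⟨k, rfl⟩ _ ⟨l, rfl⟩ - h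
  have hdouble (k) : (double k : ℕ) = 2 * k := rfl
  rw [pathGraph_adj, hdouble, hdouble] at h
  omega

section Fintype

variable [Fintype V]

lemma numIndep_pos (G : SimpleGraph V) : 0 < numIndep G :=
  Finset.card_pos.2 ⟨∅, by simp⟩

lemma two_pow_card_le_numIndep {G : SimpleGraph V} {s : Finset V} (hs : G.IsIndepSet s) :
    2 ^ s.card ≤ numIndep G := by
  classical
  rw [← Finset.card_powerset]
  refine Finset.card_le_card fun t ht => ?_
  simp only [Finset.mem_filter, Finset.mem_univ, true_and]
  intro u hu v hv h
  exact hs (Finset.mem_powerset.1 ht hu) (Finset.mem_powerset.1 ht hv) h.ne h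

lemma numIndep_le_of_embedding [Fintype W] {G : SimpleGraph V} {H : SimpleGraph W}
    (f : H ↪g G) : numIndep H ≤ numIndep G := by
  classical
  refine Finset.card_le_card_of_injOn (fun s => s.map f.toEmbedding) (fun s hs => ?_)
    (Finset.map_injective _).injOn
  simp only [Finset.coe_filter, Finset.mem_univ, true_and, Set.mem_ofPred_eq,
    Finset.mem_map] at hs ⊢
  rintro _ ⟨u, hu, rfl⟩ _ ⟨v, hv, rfl⟩
  simpa using hs u hu v hv

lemma numIndep_le_mul_of_cover {V₁ V₂ : Type*} [Fintype V₁] [Fintype V₂]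
    {G : SimpleGraph V} {G₁ : SimpleGraph V₁} {G₂ : SimpleGraph V₂}
    (f₁ : G₁ →g G) (f₂ : G₂ →g G) (hcover : ∀ v, v ∈ Set.range f₁ ∨ v ∈ Set.range f₂) :
    numIndep G ≤ numIndep G₁ * numIndep G₂ := by
  classical
  rw [numIndep, numIndep, numIndep, ← Finset.card_product]
  refine Finset.card_le_card_of_injOn
    (fun s => (Finset.univ.filter (f₁ · ∈ s), Finset.univ.filter (f₂ · ∈ s))) ?_ ?_
  · intro s hs
    simp only [Finset.coe_product, Finset.coe_filter, Finset.mem_univ, true_and,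
      Set.mem_ofPred_eq, Set.mem_prod, Finset.mem_filter] at hs ⊢
    exact ⟨fun u hu v hv h => hs _ hu _ hv (f₁.map_adj h),
      fun u hu v hv h => hs _ hu _ hv (f₂.map_adj h)⟩
  · intro s _ t _ hst
    simp only [Prod.mk.injEq, Finset.ext_iff, Finset.mem_filter, Finset.mem_univ,
      true_and] at hst
    ext v
    rcases hcover v with ⟨u, rfl⟩ | ⟨u, rfl⟩
    exacts [hst.1 u, hst.2 u]

lemma numIndep_boxProd_pathGraph_add_le (G : SimpleGraph V) (a b : ℕ) :
    numIndep (G □ pathGraph (a + b)) ≤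
      numIndep (G □ pathGraph a) * numIndep (G □ pathGraph b) :=
  numIndep_le_mul_of_cover (boxProdMapRight G (pathGraphCastAdd a b))
    (boxProdMapRight G (pathGraphNatAdd a b)) fun ⟨v, j⟩ =>
  Fin.addCases (fun j => Or.inl ⟨(v, j), rfl⟩) (fun j => Or.inr ⟨(v, j), rfl⟩) j

lemma subadditive_log_numIndep_boxProd_pathGraph (G : SimpleGraph V) :
    Subadditive fun n => log (numIndep (G □ pathGraph n)) := by
  intro a b
  have hpos := fun n => (Nat.cast_pos (α := ℝ)).2 (numIndep_pos (G □ pathGraph n))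
  rw [← log_mul (hpos a).ne' (hpos b).ne']
  exact log_le_log (hpos _) (mod_cast numIndep_boxProd_pathGraph_add_le G a b)

lemma two_pow_le_numIndep_boxProd_pathGraph [Nonempty V] (G : SimpleGraph V) (n : ℕ) :
    2 ^ ((n + 1) / 2) ≤ numIndep (G □ pathGraph n) := by
  obtain ⟨s, hs, hcard⟩ := exists_isIndepSet_pathGraph n
  calc 2 ^ ((n + 1) / 2) ≤ numIndep (pathGraph n) := hcard ▸ two_pow_card_le_numIndep hs
    _ ≤ numIndep (G □ pathGraph n) :=
      numIndep_le_of_embedding (boxProdRight G _ (Classical.arbitrary V))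

lemma log_two_div_two_le_log_numIndep_boxProd_pathGraph_div [Nonempty V]
    (G : SimpleGraph V) {n : ℕ} (hn : n ≠ 0) :
    log 2 / 2 ≤ log (numIndep (G □ pathGraph n)) / n := by
  have hn' : (0 : ℝ) < n := by positivity
  have hhalf : (n : ℝ) / 2 ≤ ((n + 1) / 2 : ℕ) := by
    rw [div_le_iff₀ two_pos]; exact_mod_cast (by omega : n ≤ (n + 1) / 2 * 2)
  rw [le_div_iff₀ hn']
  calc log 2 / 2 * n = n / 2 * log 2 := by ring
    _ ≤ ((n + 1) / 2 : ℕ) * log 2 := by gcongr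
    _ = log ((2 ^ ((n + 1) / 2) : ℕ) : ℝ) := by push_cast; rw [log_pow]
    _ ≤ log (numIndep (G □ pathGraph n)) :=
      log_le_log (by positivity) (mod_cast two_pow_le_numIndep_boxProd_pathGraph G n)

end Fintype

end SimpleGraph

theorem strip_free_energy_exists (m : ℕ) (hm : 0 < m) :
    ∃ L : ℝ, 0 < L ∧
      Tendsto (fun n : ℕ => Real.log (gridN m n) / (n : ℝ)) atTop (𝓝 L) := by
  have : Nonempty (Fin m) := ⟨⟨0, hm⟩⟩
  have hsub := subadditive_log_numIndep_boxProd_pathGraph (pathGraph m)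
  have hbdd : BddBelow (Set.range fun n : ℕ => log (gridN m n) / n) :=
    ⟨0, by rintro _ ⟨n, rfl⟩; exact div_nonneg (log_natCast_nonneg _) n.cast_nonneg⟩
  have hlim := hsub.tendsto_lim hbdd
  have hL : log 2 / 2 ≤ hsub.lim := ge_of_tendsto hlim <| eventually_atTop.2
    ⟨1, fun n hn => log_two_div_two_le_log_numIndep_boxProd_pathGraph_div _ (by omega)⟩
  exact ⟨hsub.lim, lt_of_lt_of_le (by positivity) hL, hlim⟩
end

section
/- There exists a real number f such that: (i) for all positive integers m, n, one has ln N(m,n) / ((m+1)(n+1)) < f < ln N(m,n) / (m·n); and (ii) both functions (m,n) ↦ ln N(m,n)/((m+1)(n+1)) and (m,n) ↦ ln N(m,n)/(m·n) tend to f along the product filter atTop on ℕ × ℕ (i.e., as m and n both tend to infinity). -/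
open SimpleGraph Filter Real Topology

/-! Cutting an `(a + b) × n` grid into an `a × n` and a `b × n` block gives
`N(a + b, n) ≤ N(a, n) N(b, n)`, and placing an `a × n` and a `b × n` grid side by side with an
empty column between them gives `N(a, n) N(b, n) ≤ N(a + b + 1, n)`. Using both in each direction,
`N(m, n) ^ (m' n') ≤ N(m', n') ^ ((m + 1)(n + 1))`, i.e. `f⁻(m, n) ≤ f(m', n')`, so
`f := sup f⁻` lies between every `f⁻(m, n)` and every `f(m, n)`. The inequalities are strict
because `f⁻(m, n) < f⁻(2m + 1, 2n + 1)` and `f(2m, 2n) < f(m, n)` (a single vertex on the empty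
column, resp. a pair of adjacent vertices across the cut). Finally `N(m, n) ≤ 2 ^ (mn)` gives
`f - f⁻ ≤ log 2 (1/(m + 1) + 1/(n + 1))`, which forces both limits. -/

open Finset

namespace SimpleGraph

variable {V W : Type*}

open Classical in
noncomputable def indepSubsets (G : SimpleGraph V) (R : Finset V) : Finset (Finset V) :=
  R.powerset.filter fun s => G.IsIndepSet ↑s

noncomputable def indepSetCount (G : SimpleGraph V) (R : Finset V) : ℕ :=
  #(G.indepSubsets R)

variable {G : SimpleGraph V} {H : SimpleGraph W} {R R' : Finset V} {s : Finset V}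

@[simp]
theorem mem_indepSubsets : s ∈ G.indepSubsets R ↔ s ⊆ R ∧ G.IsIndepSet ↑s := by
  classical
  simp [indepSubsets]

theorem isIndepSet_image_iff (e : G ↪g H) {s : Set V} :
    H.IsIndepSet (e '' s) ↔ G.IsIndepSet s := by
  rw [isIndepSet_iff, isIndepSet_iff, e.injective.injOn.pairwise_image]
  congr! 3 with a b
  exact not_congr e.map_adj_iff

theorem numIndep_eq_indepSetCount_univ [Fintype V] (G : SimpleGraph V) :
    numIndep G = G.indepSetCount univ := by
  classical
  unfold numIndep indepSetCount
  congr 1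
  ext s
  simp only [mem_filter, mem_univ, true_and, mem_indepSubsets, subset_univ, isIndepSet_iff,
    Set.Pairwise, mem_coe]
  exact ⟨fun h u hu v hv _ => h u hu v hv, fun h u hu v hv huv =>
    h hu hv (fun e => G.loopless.irrefl u (e ▸ huv)) huv⟩

theorem indepSetCount_map (e : G ↪g H) (R : Finset V) :
    H.indepSetCount (R.map e.toEmbedding) = G.indepSetCount R := by
  classical
  unfold indepSetCount indepSubsets
  rw [map_eq_image, powerset_image, filter_image, card_image_of_injOn]
  · simp only [coe_image, RelEmbedding.coe_toEmbedding, isIndepSet_image_iff]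
  · exact (image_injOn_powerset_of_injOn e.injective.injOn).mono (filter_subset _ _)

theorem numIndep_congr [Fintype V] [Fintype W] (e : G ≃g H) : numIndep G = numIndep H := by
  rw [numIndep_eq_indepSetCount_univ, numIndep_eq_indepSetCount_univ,
    ← indepSetCount_map e.toEmbedding, map_univ_of_surjective e.surjective]

theorem one_le_indepSetCount (G : SimpleGraph V) (R : Finset V) : 1 ≤ G.indepSetCount R :=
  card_pos.2 ⟨∅, by simp⟩

theorem indepSetCount_le_two_pow_card (G : SimpleGraph V) (R : Finset V) :
    G.indepSetCount R ≤ 2 ^ #R := by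
  classical
  exact (card_filter_le _ _).trans (card_powerset R).le

theorem indepSetCount_empty (G : SimpleGraph V) : G.indepSetCount ∅ = 1 := by
  rw [indepSetCount, card_eq_one]
  exact ⟨∅, by ext; simp +contextual⟩

theorem indepSetCount_strictMono (G : SimpleGraph V) : StrictMono G.indepSetCount := by
  intro R R' hRR'
  obtain ⟨w, hwR', hwR⟩ := exists_of_ssubset hRR'
  refine card_lt_card ((ssubset_iff_of_subset ?_).2 ⟨{w}, ?_, ?_⟩)
  · intro s hs
    rw [mem_indepSubsets] at hs ⊢
    exact ⟨hs.1.trans hRR'.subset, hs.2⟩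
  · simp [hwR']
  · simp [hwR]

section DecidableEq

variable [DecidableEq V]

theorem image_inter_indepSubsets_union_subset :
    (G.indepSubsets (R ∪ R')).image (fun s => (s ∩ R, s ∩ R')) ⊆
      G.indepSubsets R ×ˢ G.indepSubsets R' := by
  intro p hp
  obtain ⟨s, hs, rfl⟩ := mem_image.1 hp
  rw [mem_indepSubsets] at hs
  simp only [mem_product, mem_indepSubsets, coe_inter]
  exact ⟨⟨inter_subset_right, hs.2.mono Set.inter_subset_left⟩,
    inter_subset_right, hs.2.mono Set.inter_subset_left⟩

theorem card_image_inter_indepSubsets_union :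
    #((G.indepSubsets (R ∪ R')).image fun s => (s ∩ R, s ∩ R')) =
      G.indepSetCount (R ∪ R') := by
  refine card_image_of_injOn fun s hs t ht hst => ?_
  rw [mem_coe, mem_indepSubsets] at hs ht
  rw [Prod.mk.injEq] at hst
  rw [← inter_eq_left.2 hs.1, ← inter_eq_left.2 ht.1, inter_union_distrib_left,
    inter_union_distrib_left, hst.1, hst.2]

theorem indepSetCount_union_le (G : SimpleGraph V) (R R' : Finset V) :
    G.indepSetCount (R ∪ R') ≤ G.indepSetCount R * G.indepSetCount R' := by
  rw [← card_image_inter_indepSubsets_union, indepSetCount, indepSetCount, ← card_product]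
  exact card_le_card image_inter_indepSubsets_union_subset

theorem indepSetCount_union_lt {u v : V} (hu : u ∈ R) (hv : v ∈ R') (huv : G.Adj u v) :
    G.indepSetCount (R ∪ R') < G.indepSetCount R * G.indepSetCount R' := by
  rw [← card_image_inter_indepSubsets_union, indepSetCount, indepSetCount, ← card_product]
  refine card_lt_card ((ssubset_iff_of_subset image_inter_indepSubsets_union_subset).2
    ⟨({u}, {v}), by simp [hu, hv], fun h => ?_⟩)
  obtain ⟨s, hs, hsuv⟩ := mem_image.1 h
  simp only [Prod.mk.injEq] at hsuv
  have hus : u ∈ s := mem_of_mem_inter_left (hsuv.1 ▸ mem_singleton_self u)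
  have hvs : v ∈ s := mem_of_mem_inter_left (hsuv.2 ▸ mem_singleton_self v)
  exact (mem_indepSubsets.1 hs).2 hus hvs huv.ne huv

theorem mul_indepSetCount_le_union (hdisj : Disjoint R R')
    (hnadj : ∀ u ∈ R, ∀ v ∈ R', ¬ G.Adj u v) :
    G.indepSetCount R * G.indepSetCount R' ≤ G.indepSetCount (R ∪ R') := by
  rw [indepSetCount, indepSetCount, ← card_product]
  refine card_le_card_of_injOn (fun p => p.1 ∪ p.2) ?_ ?_
  · rintro ⟨s, t⟩ hst
    simp only [coe_product, Set.mem_prod, mem_coe, mem_indepSubsets] at hst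
    simp only [mem_coe, mem_indepSubsets, coe_union]
    refine ⟨union_subset_union hst.1.1 hst.2.1, ?_⟩
    rw [isIndepSet_iff, Set.pairwise_union]
    exact ⟨hst.1.2, hst.2.2, fun u hu v hv _ => ⟨hnadj u (hst.1.1 hu) v (hst.2.1 hv),
      fun h => hnadj u (hst.1.1 hu) v (hst.2.1 hv) h.symm⟩⟩
  · have union_inter : ∀ {s t : Finset V}, s ⊆ R → t ⊆ R' →
        (s ∪ t) ∩ R = s ∧ (s ∪ t) ∩ R' = t := fun hs ht =>
      ⟨by rw [union_inter_distrib_right, inter_eq_left.2 hs,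
          disjoint_iff_inter_eq_empty.1 (hdisj.symm.mono_left ht), union_empty],
        by rw [union_inter_distrib_right, inter_eq_left.2 ht,
          disjoint_iff_inter_eq_empty.1 (hdisj.mono_left hs), empty_union]⟩
    rintro ⟨s, t⟩ hst ⟨s', t'⟩ hst' h
    simp only [coe_product, Set.mem_prod, mem_coe, mem_indepSubsets] at hst hst' h
    have h₁ := union_inter hst.1.1 hst.2.1
    have h₂ := union_inter hst'.1.1 hst'.2.1
    rw [h] at h₁
    exact Prod.ext (h₁.1.symm.trans h₂.1) (h₁.2.symm.trans h₂.2)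

end DecidableEq

variable {V₁ V₂ W₁ W₂ : Type*} {G₁ : SimpleGraph V₁} {G₂ : SimpleGraph V₂}
  {H₁ : SimpleGraph W₁} {H₂ : SimpleGraph W₂}

def Embedding.boxProd (e₁ : G₁ ↪g H₁) (e₂ : G₂ ↪g H₂) : (G₁ □ G₂) ↪g (H₁ □ H₂) where
  toEmbedding := e₁.toEmbedding.prodMap e₂.toEmbedding
  map_rel_iff' := by simp [boxProd_adj, e₁.injective.eq_iff, e₂.injective.eq_iff]

def pathGraphEmbedding (n : ℕ) : pathGraph n ↪g hasse ℕ :=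
  ⟨Fin.valEmbedding, by simp [pathGraph_adj]⟩

def hasseNatAddLeft (a : ℕ) : hasse ℕ ↪g hasse ℕ :=
  ⟨addLeftEmbedding a, by intro x y; simp; omega⟩

end SimpleGraph

-- Grids are realised as rectangles in the infinite grid `hasse ℕ □ hasse ℕ`, in which
-- translations are graph embeddings.
theorem gridN_eq_indepSetCount (m n : ℕ) :
    gridN m n = (hasse ℕ □ hasse ℕ).indepSetCount (range m ×ˢ range n) := by
  rw [gridN, numIndep_eq_indepSetCount_univ,
    ← indepSetCount_map (Embedding.boxProd (pathGraphEmbedding m) (pathGraphEmbedding n)),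
    ← univ_product_univ]
  congr 1
  exact (prodMap_map_product _ _ _ _).trans (by simp [pathGraphEmbedding, Nat.Iio_eq_range])

theorem indepSetCount_map_addLeft_product (a : ℕ) (R S : Finset ℕ) :
    (hasse ℕ □ hasse ℕ).indepSetCount (R.map (addLeftEmbedding a) ×ˢ S) =
      (hasse ℕ □ hasse ℕ).indepSetCount (R ×ˢ S) := by
  rw [← indepSetCount_map
    (Embedding.boxProd (hasseNatAddLeft a) (Embedding.refl (G := hasse ℕ))) (R ×ˢ S)]
  exact congrArg _ ((prodMap_map_product _ _ R S).trans (congrArg₂ (· ×ˢ ·) rfl map_refl)).symm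

theorem gridN_add_le (a b n : ℕ) : gridN (a + b) n ≤ gridN a n * gridN b n := by
  simp only [gridN_eq_indepSetCount]
  rw [range_add, union_product, ← indepSetCount_map_addLeft_product a (range b)]
  exact indepSetCount_union_le _ _ _

theorem gridN_add_lt {a b n : ℕ} (ha : 0 < a) (hb : 0 < b) (hn : 0 < n) :
    gridN (a + b) n < gridN a n * gridN b n := by
  simp only [gridN_eq_indepSetCount]
  rw [range_add, union_product, ← indepSetCount_map_addLeft_product a (range b)]
  refine indepSetCount_union_lt (u := (a - 1, 0)) (v := (a, 0)) ?_ ?_ ?_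
  · simp [ha, hn]
  · simp [hb, hn]
  · simp [boxProd_adj]
    omega

theorem gridN_mul_le_indepSetCount (a b n : ℕ) :
    gridN a n * gridN b n ≤ (hasse ℕ □ hasse ℕ).indepSetCount
      (range a ×ˢ range n ∪ (range b).map (addLeftEmbedding (a + 1)) ×ˢ range n) := by
  simp only [gridN_eq_indepSetCount]
  rw [← indepSetCount_map_addLeft_product (a + 1) (range b)]
  refine mul_indepSetCount_le_union ?_ ?_
  · rw [disjoint_product, Finset.disjoint_left]
    left
    simp
    omega
  · simp [boxProd_adj]
    omega

theorem range_product_union_map_subset (a b n : ℕ) :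
    range a ×ˢ range n ∪ (range b).map (addLeftEmbedding (a + 1)) ×ˢ range n ⊆
      range (a + b + 1) ×ˢ range n := by
  rw [add_right_comm, range_add, union_product]
  exact union_subset_union (product_subset_product_left (range_subset_range.2 a.le_succ)) le_rfl

theorem gridN_mul_le (a b n : ℕ) : gridN a n * gridN b n ≤ gridN (a + b + 1) n := by
  rw [gridN_eq_indepSetCount (a + b + 1)]
  exact (gridN_mul_le_indepSetCount a b n).trans
    ((indepSetCount_strictMono _).monotone (range_product_union_map_subset a b n))

theorem gridN_mul_lt (a b : ℕ) {n : ℕ} (hn : 0 < n) :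
    gridN a n * gridN b n < gridN (a + b + 1) n := by
  rw [gridN_eq_indepSetCount (a + b + 1)]
  refine (gridN_mul_le_indepSetCount a b n).trans_lt (indepSetCount_strictMono _ ?_)
  refine (ssubset_iff_of_subset (range_product_union_map_subset a b n)).2 ⟨(a, 0), ?_, ?_⟩
  · simp [hn]
  · simp
    omega

theorem gridN_comm (m n : ℕ) : gridN m n = gridN n m :=
  numIndep_congr (boxProdComm _ _)

theorem gridN_zero_left (n : ℕ) : gridN 0 n = 1 := by
  rw [gridN_eq_indepSetCount, range_zero, empty_product, indepSetCount_empty]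

theorem one_le_gridN (m n : ℕ) : 1 ≤ gridN m n := by
  rw [gridN_eq_indepSetCount]
  exact one_le_indepSetCount _ _

theorem gridN_le_two_pow (m n : ℕ) : gridN m n ≤ 2 ^ (m * n) := by
  rw [gridN_eq_indepSetCount]
  simpa using indepSetCount_le_two_pow_card (hasse ℕ □ hasse ℕ) (range m ×ˢ range n)

theorem gridN_mul_le_pow (k m n : ℕ) : gridN (k * m) n ≤ gridN m n ^ k := by
  induction k with
  | zero => simp [gridN_zero_left]
  | succ k ih =>
    rw [add_mul, one_mul, pow_succ]
    exact (gridN_add_le _ _ _).trans (Nat.mul_le_mul_right _ ih)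

theorem pow_le_gridN_mul (k m n : ℕ) : gridN m n ^ k ≤ gridN (k * (m + 1)) n := by
  induction k with
  | zero => simp [gridN_zero_left]
  | succ k ih =>
    rw [pow_succ, add_mul, one_mul, ← add_assoc]
    exact (Nat.mul_le_mul_right _ ih).trans (gridN_mul_le _ _ _)

theorem gridN_pow_le_pow (m n m' n' : ℕ) :
    gridN m n ^ (m' * n') ≤ gridN m' n' ^ ((m + 1) * (n + 1)) :=
  calc gridN m n ^ (m' * n') = (gridN m n ^ m') ^ n' := pow_mul _ _ _
    _ ≤ gridN (m' * (m + 1)) n ^ n' := Nat.pow_le_pow_left (pow_le_gridN_mul _ _ _) _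
    _ = gridN n (m' * (m + 1)) ^ n' := by rw [gridN_comm]
    _ ≤ gridN (n' * (n + 1)) (m' * (m + 1)) := pow_le_gridN_mul _ _ _
    _ = gridN ((m + 1) * m') (n' * (n + 1)) := by rw [gridN_comm, mul_comm m']
    _ ≤ gridN m' (n' * (n + 1)) ^ (m + 1) := gridN_mul_le_pow _ _ _
    _ = gridN ((n + 1) * n') m' ^ (m + 1) := by rw [gridN_comm, mul_comm n']
    _ ≤ (gridN n' m' ^ (n + 1)) ^ (m + 1) := Nat.pow_le_pow_left (gridN_mul_le_pow _ _ _) _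
    _ = gridN m' n' ^ ((m + 1) * (n + 1)) := by rw [gridN_comm, ← pow_mul, mul_comm]

theorem gridN_pow_four_lt (m n : ℕ) : gridN m n ^ 4 < gridN (2 * m + 1) (2 * n + 1) := by
  have hsq : gridN m n ^ 2 ≤ gridN m (2 * n + 1) := by
    rw [gridN_comm m, gridN_comm m, sq, two_mul]
    exact gridN_mul_le n n m
  calc gridN m n ^ 4 = (gridN m n ^ 2) ^ 2 := by rw [← pow_mul]
    _ ≤ gridN m (2 * n + 1) ^ 2 := Nat.pow_le_pow_left hsq 2
    _ < gridN (2 * m + 1) (2 * n + 1) := by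
        rw [sq, two_mul m]
        exact gridN_mul_lt m m (Nat.succ_pos _)

theorem gridN_two_mul_lt_pow_four {m n : ℕ} (hm : 0 < m) (hn : 0 < n) :
    gridN (2 * m) (2 * n) < gridN m n ^ 4 := by
  have hsq : gridN (2 * m) (2 * n) ≤ gridN (2 * m) n ^ 2 := by
    rw [gridN_comm _ (2 * n), gridN_comm _ n, sq, two_mul n]
    exact gridN_add_le n n _
  calc gridN (2 * m) (2 * n) ≤ gridN (2 * m) n ^ 2 := hsq
    _ < (gridN m n ^ 2) ^ 2 := by
        refine Nat.pow_lt_pow_left ?_ two_ne_zero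
        rw [sq, two_mul]
        exact gridN_add_lt hm hm hn
    _ = gridN m n ^ 4 := by rw [← pow_mul]

theorem tendsto_of_le_of_le_of_tendsto_sub {α : Type*} {l : Filter α} {a b : α → ℝ}
    {c : ℝ} (ha : ∀ᶠ x in l, a x ≤ c) (hb : ∀ᶠ x in l, c ≤ b x)
    (hab : Tendsto (fun x => b x - a x) l (𝓝 0)) :
    Tendsto a l (𝓝 c) ∧ Tendsto b l (𝓝 c) := by
  constructor
  · refine tendsto_of_tendsto_of_tendsto_of_le_of_le' (g := fun x => c - (b x - a x))
      (by simpa using tendsto_const_nhds.sub hab) tendsto_const_nhds ?_ ha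
    filter_upwards [hb] with x hx
    linarith
  · refine tendsto_of_tendsto_of_tendsto_of_le_of_le' (h := fun x => c + (b x - a x))
      tendsto_const_nhds (by simpa using tendsto_const_nhds.add hab) hb ?_
    filter_upwards [ha] with x hx
    linarith

-- The paper's `f(m, n)` and `f⁻(m, n)`.
noncomputable def freeEnergy (m n : ℕ) : ℝ :=
  Real.log (gridN m n) / ((m : ℝ) * (n : ℝ))

noncomputable def lowerFreeEnergy (m n : ℕ) : ℝ :=
  Real.log (gridN m n) / (((m : ℝ) + 1) * ((n : ℝ) + 1))

theorem log_gridN_le (m n : ℕ) : Real.log (gridN m n) ≤ m * n * Real.log 2 := by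
  have h : (gridN m n : ℝ) ≤ 2 ^ (m * n) := by exact_mod_cast gridN_le_two_pow m n
  have hpos : (0 : ℝ) < gridN m n := by exact_mod_cast one_le_gridN m n
  simpa using Real.log_le_log hpos h

theorem log_gridN_pow_le_pow (m n m' n' : ℕ) :
    (m' * n' : ℝ) * Real.log (gridN m n) ≤
      ((m + 1) * (n + 1) : ℝ) * Real.log (gridN m' n') := by
  have h : ((gridN m n : ℝ)) ^ (m' * n') ≤ (gridN m' n' : ℝ) ^ ((m + 1) * (n + 1)) := by
    exact_mod_cast gridN_pow_le_pow m n m' n'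
  have hpos : (0 : ℝ) < gridN m n := by exact_mod_cast one_le_gridN m n
  simpa using Real.log_le_log (pow_pos hpos _) h

theorem lowerFreeEnergy_le_freeEnergy (m n : ℕ) {m' n' : ℕ} (hm' : 0 < m') (hn' : 0 < n') :
    lowerFreeEnergy m n ≤ freeEnergy m' n' := by
  rw [lowerFreeEnergy, freeEnergy, div_le_div_iff₀ (by positivity) (by positivity)]
  linarith [log_gridN_pow_le_pow m n m' n']

theorem lowerFreeEnergy_lt_two_mul_add_one (m n : ℕ) :
    lowerFreeEnergy m n < lowerFreeEnergy (2 * m + 1) (2 * n + 1) := by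
  have h : ((gridN m n : ℝ)) ^ 4 < gridN (2 * m + 1) (2 * n + 1) := by
    exact_mod_cast gridN_pow_four_lt m n
  have hpos : (0 : ℝ) < gridN m n := by exact_mod_cast one_le_gridN m n
  have hlog := Real.log_lt_log (pow_pos hpos 4) h
  rw [Real.log_pow, Nat.cast_ofNat] at hlog
  have hmn : (0 : ℝ) < (m + 1) * (n + 1) := by positivity
  rw [lowerFreeEnergy, lowerFreeEnergy, div_lt_div_iff₀ hmn (by positivity)]
  push_cast
  nlinarith [mul_lt_mul_of_pos_right hlog hmn]

theorem freeEnergy_two_mul_lt {m n : ℕ} (hm : 0 < m) (hn : 0 < n) :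
    freeEnergy (2 * m) (2 * n) < freeEnergy m n := by
  have h : (gridN (2 * m) (2 * n) : ℝ) < (gridN m n : ℝ) ^ 4 := by
    exact_mod_cast gridN_two_mul_lt_pow_four hm hn
  have hpos : (0 : ℝ) < gridN (2 * m) (2 * n) := by exact_mod_cast one_le_gridN _ _
  have hlog := Real.log_lt_log hpos h
  rw [Real.log_pow, Nat.cast_ofNat] at hlog
  have hmn : (0 : ℝ) < m * n := by positivity
  rw [freeEnergy, freeEnergy, div_lt_div_iff₀ (by positivity) hmn]
  push_cast
  nlinarith [mul_lt_mul_of_pos_right hlog hmn]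

theorem freeEnergy_sub_lowerFreeEnergy_le {m n : ℕ} (hm : 0 < m) (hn : 0 < n) :
    freeEnergy m n - lowerFreeEnergy m n ≤
      Real.log 2 * (1 / ((m : ℝ) + 1) + 1 / ((n : ℝ) + 1)) := by
  have hL := log_gridN_le m n
  have hlog2 : 0 ≤ Real.log 2 := Real.log_nonneg one_le_two
  have hm' : (0 : ℝ) < m := by exact_mod_cast hm
  have hn' : (0 : ℝ) < n := by exact_mod_cast hn
  rw [freeEnergy, lowerFreeEnergy, div_sub_div _ _ (by positivity) (by positivity),
    div_le_iff₀ (by positivity)]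
  field_simp
  nlinarith [mul_le_mul_of_nonneg_right hL (by positivity : (0 : ℝ) ≤ m + n + 1),
    mul_nonneg (mul_nonneg hm'.le hn'.le) hlog2]

theorem eventually_pos_fst_snd : ∀ᶠ p : ℕ × ℕ in atTop, 0 < p.1 ∧ 0 < p.2 :=
  (eventually_ge_atTop (1, 1)).mono fun _ hp => ⟨hp.1, hp.2⟩

theorem tendsto_freeEnergy_sub_lowerFreeEnergy :
    Tendsto (fun p : ℕ × ℕ => freeEnergy p.1 p.2 - lowerFreeEnergy p.1 p.2) atTop (𝓝 0) := by
  have hbound : Tendsto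
      (fun p : ℕ × ℕ => Real.log 2 * (1 / ((p.1 : ℝ) + 1) + 1 / ((p.2 : ℝ) + 1))) atTop (𝓝 0) := by
    rw [← prod_atTop_atTop_eq]
    simpa using ((tendsto_one_div_add_atTop_nhds_zero_nat.comp tendsto_fst).add
      (tendsto_one_div_add_atTop_nhds_zero_nat.comp tendsto_snd)).const_mul (Real.log 2)
  refine tendsto_of_tendsto_of_tendsto_of_le_of_le' tendsto_const_nhds hbound ?_ ?_
  · filter_upwards [eventually_pos_fst_snd] with p hp
    exact sub_nonneg.2 (lowerFreeEnergy_le_freeEnergy _ _ hp.1 hp.2)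
  · filter_upwards [eventually_pos_fst_snd] with p hp
    exact freeEnergy_sub_lowerFreeEnergy_le hp.1 hp.2

theorem grid_free_energy_exists :
    ∃ f : ℝ,
      (∀ m n : ℕ, 0 < m → 0 < n →
        Real.log (gridN m n) / (((m : ℝ) + 1) * ((n : ℝ) + 1)) < f ∧
        f < Real.log (gridN m n) / ((m : ℝ) * (n : ℝ))) ∧
      Tendsto (fun p : ℕ × ℕ =>
          Real.log (gridN p.1 p.2) / (((p.1 : ℝ) + 1) * ((p.2 : ℝ) + 1)))
        atTop (𝓝 f) ∧
      Tendsto (fun p : ℕ × ℕ =>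
          Real.log (gridN p.1 p.2) / ((p.1 : ℝ) * (p.2 : ℝ)))
        atTop (𝓝 f) := by
  have hbdd : BddAbove (Set.range fun p : ℕ × ℕ => lowerFreeEnergy p.1 p.2) :=
    ⟨freeEnergy 1 1, Set.forall_mem_range.2 fun _ =>
      lowerFreeEnergy_le_freeEnergy _ _ one_pos one_pos⟩
  set f := ⨆ p : ℕ × ℕ, lowerFreeEnergy p.1 p.2
  have lower_lt (m n : ℕ) : lowerFreeEnergy m n < f :=
    (lowerFreeEnergy_lt_two_mul_add_one m n).trans_le (le_ciSup hbdd (2 * m + 1, 2 * n + 1))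
  have le_upper {m n : ℕ} (hm : 0 < m) (hn : 0 < n) : f ≤ freeEnergy m n :=
    ciSup_le fun p => lowerFreeEnergy_le_freeEnergy p.1 p.2 hm hn
  obtain ⟨hlower, hupper⟩ := tendsto_of_le_of_le_of_tendsto_sub
    (a := fun p : ℕ × ℕ => lowerFreeEnergy p.1 p.2) (b := fun p => freeEnergy p.1 p.2)
    (Eventually.of_forall fun p => (lower_lt p.1 p.2).le)
    (eventually_pos_fst_snd.mono fun p hp => le_upper hp.1 hp.2)
    tendsto_freeEnergy_sub_lowerFreeEnergy
  refine ⟨f, fun m n hm hn => ⟨lower_lt m n, ?_⟩, hlower, hupper⟩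
  exact (le_upper (by omega : 0 < 2 * m) (by omega : 0 < 2 * n)).trans_lt
    (freeEnergy_two_mul_lt hm hn)
end

section
/- There exists a real number f_Δ such that: (i) for all positive integers m, n, one has ln Δ(m,n) / ((m+1)(n+1)) < f_Δ < ln Δ(m,n) / (m·n); and (ii) the function (m,n) ↦ ln Δ(m,n)/(m·n) tends to f_Δ along the product filter atTop on ℕ × ℕ (as m and n both tend to infinity). -/
open SimpleGraph Filter Real Topology

/-- The `m × n` triangular grid graph: grid edges together with the
anti-diagonal edges joining `(i+1, j)` and `(i, j+1)`. -/
noncomputable def triGrid (m n : ℕ) : SimpleGraph (Fin m × Fin n) :=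
  (pathGraph m □ pathGraph n) ⊔
    SimpleGraph.fromRel (fun u v => u.1.val = v.1.val + 1 ∧ u.2.val + 1 = v.2.val)

/-- `Δ(m,n)`: number of independent sets of the `m × n` triangular grid graph. -/
noncomputable def triDelta (m n : ℕ) : ℕ := numIndep (triGrid m n)

/-!
Cutting an `(a + b) × n` strip into an `a × n` and a `b × n` strip gives
`Δ(a + b, n) ≤ Δ(a, n) Δ(b, n)`, while an `a × n` and a `b × n` strip separated by an empty line
carry independent configurations, giving `Δ(a, n) Δ(b, n) ≤ Δ(a + b + 1, n)`; the lattice is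
symmetric under swapping coordinates, so the same holds in the other direction. Iterating both
inequalities `M` times (resp. `N` times) yields `M N log Δ(a, b) ≤ (a + 1)(b + 1) log Δ(M, N)`:
every lower bound `log Δ(m, n) / ((m + 1)(n + 1))` is below every upper bound
`log Δ(m, n) / (m n)`, and `f_Δ` is the supremum of the lower bounds. Both inequalities are
strict for nonempty strips, so `(m, n) ↦ (2m + 1, n)` strictly raises the lower bound and
`(m, n) ↦ (2m, 2n)` strictly lowers the upper bound. Finally the two bounds differ by the factor
`(1 + 1/m)(1 + 1/n) → 1`.
-/

open Finset

namespace SimpleGraph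

variable {V W : Type*} {G : SimpleGraph V} {s s' t : Finset V}

variable (G) in
open Classical in
noncomputable def indepSets (s : Finset V) : Finset (Finset V) :=
  s.powerset.filter fun t => ∀ u ∈ t, ∀ v ∈ t, ¬ G.Adj u v

lemma mem_indepSets : t ∈ G.indepSets s ↔ t ⊆ s ∧ ∀ u ∈ t, ∀ v ∈ t, ¬ G.Adj u v := by
  simp [indepSets]

lemma empty_mem_indepSets : ∅ ∈ G.indepSets s := by
  simp [mem_indepSets]

lemma singleton_mem_indepSets {v : V} (hv : v ∈ s) : {v} ∈ G.indepSets s := by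
  simp [mem_indepSets, hv]

lemma indepSets_mono (h : s ⊆ s') : G.indepSets s ⊆ G.indepSets s' := fun _ ht =>
  mem_indepSets.2 ((mem_indepSets.1 ht).imp_left (·.trans h))

lemma card_indepSets_pos : 0 < #(G.indepSets s) :=
  card_pos.2 ⟨∅, empty_mem_indepSets⟩

lemma card_indepSets_empty : #(G.indepSets ∅) = 1 :=
  card_eq_one.2 ⟨∅, eq_singleton_iff_unique_mem.2
    ⟨empty_mem_indepSets, fun _ ht => subset_empty.1 (mem_indepSets.1 ht).1⟩⟩

lemma numIndep_eq_card_indepSets_univ [Fintype V] : numIndep G = #(G.indepSets univ) := by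
  rw [numIndep, indepSets, powerset_univ]
  convert rfl

lemma card_indepSets_map {H : SimpleGraph W} (e : V ↪ W)
    (he : ∀ u v, H.Adj (e u) (e v) ↔ G.Adj u v) (s : Finset V) :
    #(H.indepSets (s.map e)) = #(G.indepSets s) := by
  refine (card_bij (fun t _ => t.map e) (fun t ht => ?_)
    (fun _ _ _ _ h => Finset.map_injective e h) (fun t' ht' => ?_)).symm
  · obtain ⟨hts, hind⟩ := mem_indepSets.1 ht
    refine mem_indepSets.2 ⟨map_subset_map.2 hts, ?_⟩
    simp only [Finset.mem_map]
    rintro _ ⟨u, hu, rfl⟩ _ ⟨v, hv, rfl⟩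
    exact (he u v).not.2 (hind u hu v hv)
  · obtain ⟨ht's, hind⟩ := mem_indepSets.1 ht'
    obtain ⟨t, hts, rfl⟩ := subset_map_iff.1 ht's
    refine ⟨t, mem_indepSets.2 ⟨hts, fun u hu v hv => ?_⟩, rfl⟩
    exact (he u v).not.1 (hind _ (mem_map_of_mem e hu) _ (mem_map_of_mem e hv))

variable [DecidableEq V]

lemma card_indepSets_lt_insert {w : V} (hw : w ∉ s) :
    #(G.indepSets s) < #(G.indepSets (insert w s)) := by
  refine card_lt_card ((ssubset_iff_of_subset (indepSets_mono (subset_insert w s))).2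
    ⟨{w}, singleton_mem_indepSets (mem_insert_self w s), fun h => hw ?_⟩)
  exact (mem_indepSets.1 h).1 (mem_singleton_self w)

lemma inter_mem_indepSets_product (ht : t ∈ G.indepSets (s ∪ s')) :
    (t ∩ s, t ∩ s') ∈ G.indepSets s ×ˢ G.indepSets s' := by
  obtain ⟨-, hind⟩ := mem_indepSets.1 ht
  simp only [mem_product, mem_indepSets, inter_subset_right, mem_inter, true_and]
  exact ⟨fun u hu v hv => hind u hu.1 v hv.1, fun u hu v hv => hind u hu.1 v hv.1⟩

lemma injOn_inter_prod :
    Set.InjOn (fun t => (t ∩ s, t ∩ s')) (G.indepSets (s ∪ s')) := by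
  intro t ht t' ht' h
  rw [Prod.mk.injEq] at h
  rw [← inter_eq_left.2 (mem_indepSets.1 ht).1, ← inter_eq_left.2 (mem_indepSets.1 ht').1,
    inter_union_distrib_left, inter_union_distrib_left, h.1, h.2]

lemma card_indepSets_union_le (s s' : Finset V) :
    #(G.indepSets (s ∪ s')) ≤ #(G.indepSets s) * #(G.indepSets s') := by
  rw [← card_product]
  exact card_le_card_of_injOn _ (fun _ ht => inter_mem_indepSets_product ht) injOn_inter_prod

lemma card_indepSets_union_lt {u v : V} (hu : u ∈ s) (hv : v ∈ s') (huv : G.Adj u v) :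
    #(G.indepSets (s ∪ s')) < #(G.indepSets s) * #(G.indepSets s') := by
  have hmem : ({u}, {v}) ∈ G.indepSets s ×ˢ G.indepSets s' :=
    mem_product.2 ⟨singleton_mem_indepSets hu, singleton_mem_indepSets hv⟩
  -- `({u}, {v})` is missed: a set meeting `s` in `u` and `s'` in `v` contains the edge `uv`.
  have hmiss : ∀ t ∈ G.indepSets (s ∪ s'),
      (t ∩ s, t ∩ s') ∈ (G.indepSets s ×ˢ G.indepSets s').erase ({u}, {v}) := by
    intro t ht
    refine mem_erase.2 ⟨fun h => ?_, inter_mem_indepSets_product ht⟩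
    rw [Prod.mk.injEq] at h
    have hut : u ∈ t := (mem_inter.1 (h.1 ▸ mem_singleton_self u)).1
    have hvt : v ∈ t := (mem_inter.1 (h.2 ▸ mem_singleton_self v)).1
    exact (mem_indepSets.1 ht).2 u hut v hvt huv
  have hle := card_le_card_of_injOn _ hmiss injOn_inter_prod
  have hpos := card_pos.2 ⟨_, hmem⟩
  rw [card_erase_of_mem hmem] at hle
  rw [card_product] at hle hpos
  omega

lemma card_indepSets_mul_le_union (hd : Disjoint s s') (hs : ∀ u ∈ s, ∀ v ∈ s', ¬ G.Adj u v) :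
    #(G.indepSets s) * #(G.indepSets s') ≤ #(G.indepSets (s ∪ s')) := by
  rw [← card_product]
  refine card_le_card_of_injOn (fun p => p.1 ∪ p.2) (fun p hp => ?_) (fun p hp q hq h => ?_)
  · obtain ⟨⟨h₁, i₁⟩, ⟨h₂, i₂⟩⟩ := (mem_product.1 hp).imp mem_indepSets.1 mem_indepSets.1
    refine mem_indepSets.2 ⟨union_subset_union h₁ h₂, ?_⟩
    simp only [mem_union]
    rintro u (hu | hu) v (hv | hv)
    exacts [i₁ u hu v hv, hs u (h₁ hu) v (h₂ hv), fun h => hs v (h₁ hv) u (h₂ hu) h.symm,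
      i₂ u hu v hv]
  · have hrecover : ∀ p ∈ G.indepSets s ×ˢ G.indepSets s',
        (p.1 ∪ p.2) ∩ s = p.1 ∧ (p.1 ∪ p.2) ∩ s' = p.2 := by
      intro p hp
      obtain ⟨h₁, h₂⟩ :=
        (mem_product.1 hp).imp (mem_indepSets.1 · |>.1) (mem_indepSets.1 · |>.1)
      rw [union_inter_distrib_right, union_inter_distrib_right, inter_eq_left.2 h₁,
        inter_eq_left.2 h₂, disjoint_iff_inter_eq_empty.1 (hd.mono_left h₁),
        disjoint_iff_inter_eq_empty.1 (hd.symm.mono_left h₂), union_empty, empty_union]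
      exact ⟨rfl, rfl⟩
    obtain ⟨hp₁, hp₂⟩ := hrecover p hp
    obtain ⟨hq₁, hq₂⟩ := hrecover q hq
    simp only at h
    rw [h] at hp₁ hp₂
    exact Prod.ext (hp₁.symm.trans hq₁) (hp₂.symm.trans hq₂)

end SimpleGraph

def triLattice : SimpleGraph (ℕ × ℕ) :=
  (hasse ℕ □ hasse ℕ) ⊔ SimpleGraph.fromRel fun u v => u.1 = v.1 + 1 ∧ u.2 + 1 = v.2

lemma triLattice_adj {u v : ℕ × ℕ} :
    triLattice.Adj u v ↔
      (u.2 = v.2 ∧ (u.1 + 1 = v.1 ∨ v.1 + 1 = u.1)) ∨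
        (u.1 = v.1 ∧ (u.2 + 1 = v.2 ∨ v.2 + 1 = u.2)) ∨
        (u.1 = v.1 + 1 ∧ u.2 + 1 = v.2) ∨ (v.1 = u.1 + 1 ∧ v.2 + 1 = u.2) := by
  simp only [triLattice, sup_adj, boxProd_adj, hasse_adj, Nat.covBy_iff_add_one_eq, fromRel_adj,
    ne_eq, Prod.ext_iff]
  omega

def rect (i m n : ℕ) : Finset (ℕ × ℕ) := Ico i (i + m) ×ˢ range n

lemma mem_rect {i m n : ℕ} {u : ℕ × ℕ} : u ∈ rect i m n ↔ i ≤ u.1 ∧ u.1 < i + m ∧ u.2 < n := by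
  simp [rect, and_assoc]

lemma card_indepSets_rect (i m n : ℕ) : #(triLattice.indepSets (rect i m n)) = triDelta m n := by
  let e : Fin m × Fin n ↪ ℕ × ℕ :=
    ⟨fun x => (i + x.1, x.2), fun x y h => by simpa [Prod.ext_iff, Fin.ext_iff] using h⟩
  have he : ∀ x, e x = (i + x.1, (x.2 : ℕ)) := fun _ => rfl
  have hmap : univ.map e = rect i m n := by
    ext ⟨a, b⟩
    simp only [Finset.mem_map, mem_univ, true_and, mem_rect, he, Prod.mk.injEq, Prod.exists]
    refine ⟨fun ⟨x, y, hx, hy⟩ => by omega,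
      fun h => ⟨⟨a - i, by omega⟩, ⟨b, h.2.2⟩, by simp only; omega, rfl⟩⟩
  rw [triDelta, numIndep_eq_card_indepSets_univ, ← hmap]
  refine card_indepSets_map e (fun u v => ?_) univ
  simp only [triLattice_adj, triGrid, sup_adj, boxProd_adj, pathGraph_adj, fromRel_adj, he,
    ne_eq, Prod.ext_iff, Fin.ext_iff]
  omega

lemma triDelta_zero_left (n : ℕ) : triDelta 0 n = 1 := by
  have h : rect 0 0 n = ∅ := by simp [rect]
  rw [← card_indepSets_rect 0, h, card_indepSets_empty]

lemma triDelta_pos (m n : ℕ) : 0 < triDelta m n :=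
  card_indepSets_rect 0 m n ▸ card_indepSets_pos

lemma triDelta_comm (m n : ℕ) : triDelta m n = triDelta n m := by
  rw [← card_indepSets_rect 0, ← card_indepSets_rect 0,
    ← card_indepSets_map (Equiv.prodComm ℕ ℕ).toEmbedding (fun u v => ?_)]
  · congr
    ext ⟨a, b⟩
    simp [mem_rect, and_comm]
  · simp only [Equiv.coe_toEmbedding, Equiv.prodComm_apply, Prod.fst_swap, Prod.snd_swap,
      triLattice_adj]
    omega

lemma rect_add (a b n : ℕ) : rect 0 (a + b) n = rect 0 a n ∪ rect a b n := by
  ext u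
  simp only [mem_union, mem_rect]
  omega

lemma triDelta_add_le (a b n : ℕ) : triDelta (a + b) n ≤ triDelta a n * triDelta b n := by
  simpa only [← card_indepSets_rect 0, card_indepSets_rect a, rect_add] using
    card_indepSets_union_le (G := triLattice) (rect 0 a n) (rect a b n)

lemma triDelta_add_lt {a b n : ℕ} (ha : 0 < a) (hb : 0 < b) (hn : 0 < n) :
    triDelta (a + b) n < triDelta a n * triDelta b n := by
  have hu : (a - 1, 0) ∈ rect 0 a n := mem_rect.2 ⟨by omega, by omega, hn⟩
  have hv : (a, 0) ∈ rect a b n := mem_rect.2 ⟨le_rfl, by omega, hn⟩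
  have huv : triLattice.Adj (a - 1, 0) (a, 0) :=
    triLattice_adj.2 (Or.inl ⟨rfl, Or.inl (by omega)⟩)
  simpa only [← card_indepSets_rect 0, card_indepSets_rect a, rect_add] using
    card_indepSets_union_lt hu hv huv

-- The two rectangles are separated by the empty line `{a} ×ˢ range n`, so no edge joins them.
lemma triDelta_mul_le_card_indepSets (a b n : ℕ) :
    triDelta a n * triDelta b n ≤ #(triLattice.indepSets (rect 0 a n ∪ rect (a + 1) b n)) := by
  rw [← card_indepSets_rect 0, ← card_indepSets_rect (a + 1)]
  refine card_indepSets_mul_le_union (disjoint_left.2 fun u hu hu' => ?_) fun u hu v hv huv => ?_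
  · rw [mem_rect] at hu hu'
    omega
  · rw [mem_rect] at hu hv
    rw [triLattice_adj] at huv
    omega

lemma triDelta_mul_le (a b n : ℕ) : triDelta a n * triDelta b n ≤ triDelta (a + b + 1) n := by
  refine (triDelta_mul_le_card_indepSets a b n).trans ?_
  rw [← card_indepSets_rect 0]
  refine card_le_card (indepSets_mono fun u hu => ?_)
  rw [mem_union, mem_rect, mem_rect] at hu
  rw [mem_rect]
  omega

lemma triDelta_mul_lt {n : ℕ} (a b : ℕ) (hn : 0 < n) :
    triDelta a n * triDelta b n < triDelta (a + b + 1) n := by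
  refine (triDelta_mul_le_card_indepSets a b n).trans_lt
    ((card_indepSets_lt_insert (w := (a, 0)) ?_).trans_le ?_)
  · rw [mem_union, mem_rect, mem_rect]
    omega
  · rw [← card_indepSets_rect 0]
    refine card_le_card (indepSets_mono fun u hu => ?_)
    rw [mem_insert, mem_union, mem_rect, mem_rect] at hu
    rw [mem_rect]
    rcases hu with rfl | hu
    · exact ⟨Nat.zero_le a, by omega, hn⟩
    · omega

lemma Subadditive.natCast_mul_le_add_one_mul {g : ℕ → ℝ} (hsub : Subadditive g)
    (hsup : ∀ a b, g a + g b ≤ g (a + b + 1)) (h0 : g 0 = 0) (a M : ℕ) :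
    M * g a ≤ (a + 1) * g M := by
  have hiter : ∀ k : ℕ, k * g a ≤ g (k * (a + 1)) := by
    intro k
    induction k with
    | zero => simp [h0]
    | succ k ih =>
      calc ((k + 1 : ℕ) : ℝ) * g a = k * g a + g a := by push_cast; ring
        _ ≤ g (k * (a + 1)) + g a := by linarith
        _ ≤ g (k * (a + 1) + a + 1) := hsup _ _
        _ = g ((k + 1) * (a + 1)) := by congr 1; ring
  calc M * g a ≤ g ((a + 1) * M + 0) := (hiter M).trans_eq (by rw [add_zero, Nat.mul_comm])
    _ ≤ ((a + 1 : ℕ) : ℝ) * g M + g 0 := hsub.apply_mul_add_le _ _ _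
    _ = (a + 1) * g M := by rw [h0]; push_cast; ring

lemma cast_triDelta_pos (m n : ℕ) : (0 : ℝ) < triDelta m n := Nat.cast_pos.2 (triDelta_pos m n)

lemma subadditive_log_triDelta (n : ℕ) : Subadditive fun m => log (triDelta m n) := fun a b => by
  rw [← log_mul (cast_triDelta_pos a n).ne' (cast_triDelta_pos b n).ne']
  exact log_le_log (cast_triDelta_pos _ n) (by exact_mod_cast triDelta_add_le a b n)

lemma log_triDelta_add_log_triDelta_le (a b n : ℕ) :
    log (triDelta a n) + log (triDelta b n) ≤ log (triDelta (a + b + 1) n) := by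
  rw [← log_mul (cast_triDelta_pos a n).ne' (cast_triDelta_pos b n).ne']
  exact log_le_log (mul_pos (cast_triDelta_pos a n) (cast_triDelta_pos b n))
    (by exact_mod_cast triDelta_mul_le a b n)

lemma natCast_mul_log_triDelta_le (a M n : ℕ) :
    M * log (triDelta a n) ≤ (a + 1) * log (triDelta M n) :=
  (subadditive_log_triDelta n).natCast_mul_le_add_one_mul (log_triDelta_add_log_triDelta_le · · n)
    (by simp [triDelta_zero_left]) a M

lemma mul_log_triDelta_le (a b M N : ℕ) :
    (M * N) * log (triDelta a b) ≤ ((a + 1) * (b + 1)) * log (triDelta M N) := by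
  have hrow := natCast_mul_log_triDelta_le a M b
  have hcol := natCast_mul_log_triDelta_le b N M
  rw [triDelta_comm b M, triDelta_comm N M] at hcol
  calc (M * N) * log (triDelta a b) = N * (M * log (triDelta a b)) := by ring
    _ ≤ N * ((a + 1) * log (triDelta M b)) := by gcongr
    _ = (a + 1) * (N * log (triDelta M b)) := by ring
    _ ≤ (a + 1) * ((b + 1) * log (triDelta M N)) := by gcongr
    _ = ((a + 1) * (b + 1)) * log (triDelta M N) := by ring

lemma two_mul_log_triDelta_lt (m : ℕ) {n : ℕ} (hn : 0 < n) :
    2 * log (triDelta m n) < log (triDelta (2 * m + 1) n) := by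
  have h : (triDelta m n : ℝ) ^ 2 < triDelta (2 * m + 1) n := by
    rw [two_mul]
    exact_mod_cast (sq (triDelta m n)).trans_lt (triDelta_mul_lt m m hn)
  calc 2 * log (triDelta m n) = log ((triDelta m n : ℝ) ^ 2) := by rw [log_pow]; norm_num
    _ < log (triDelta (2 * m + 1) n) := log_lt_log (pow_pos (cast_triDelta_pos m n) 2) h

lemma log_triDelta_two_mul_lt {m n : ℕ} (hm : 0 < m) (hn : 0 < n) :
    log (triDelta (2 * m) (2 * n)) < 4 * log (triDelta m n) := by
  have hcol : triDelta m (2 * n) ≤ triDelta m n ^ 2 := by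
    rw [triDelta_comm, two_mul, sq, triDelta_comm m n]
    exact triDelta_add_le n n m
  have h : triDelta (2 * m) (2 * n) < triDelta m n ^ 4 :=
    calc triDelta (2 * m) (2 * n) < triDelta m (2 * n) * triDelta m (2 * n) := by
          rw [two_mul m]; exact triDelta_add_lt hm hm (by omega)
      _ ≤ triDelta m n ^ 2 * triDelta m n ^ 2 := Nat.mul_le_mul hcol hcol
      _ = triDelta m n ^ 4 := by ring
  calc log (triDelta (2 * m) (2 * n)) < log ((triDelta m n : ℝ) ^ 4) :=
        log_lt_log (cast_triDelta_pos _ _) (by exact_mod_cast h)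
    _ = 4 * log (triDelta m n) := by rw [log_pow]; norm_num

lemma log_triDelta_div_le_log_triDelta_div (a b : ℕ) {M N : ℕ} (hM : 0 < M) (hN : 0 < N) :
    log (triDelta a b) / ((a + 1) * (b + 1)) ≤ log (triDelta M N) / (M * N) := by
  rw [div_le_div_iff₀ (by positivity) (by positivity)]
  linarith [mul_log_triDelta_le a b M N]

noncomputable def triFreeEnergy : ℝ :=
  ⨆ p : ℕ × ℕ, log (triDelta p.1 p.2) / ((p.1 + 1) * (p.2 + 1))

lemma bddAbove_range_log_triDelta_div :
    BddAbove (Set.range fun p : ℕ × ℕ => log (triDelta p.1 p.2) / ((p.1 + 1) * (p.2 + 1))) :=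
  ⟨_, Set.forall_mem_range.2 fun p =>
    log_triDelta_div_le_log_triDelta_div p.1 p.2 Nat.one_pos Nat.one_pos⟩

lemma log_triDelta_div_le_triFreeEnergy (m n : ℕ) :
    log (triDelta m n) / ((m + 1) * (n + 1)) ≤ triFreeEnergy :=
  le_ciSup bddAbove_range_log_triDelta_div (m, n)

lemma triFreeEnergy_le_log_triDelta_div {m n : ℕ} (hm : 0 < m) (hn : 0 < n) :
    triFreeEnergy ≤ log (triDelta m n) / (m * n) :=
  ciSup_le fun p => log_triDelta_div_le_log_triDelta_div p.1 p.2 hm hn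

lemma log_triDelta_div_lt_triFreeEnergy (m : ℕ) {n : ℕ} (hn : 0 < n) :
    log (triDelta m n) / ((m + 1) * (n + 1)) < triFreeEnergy := by
  refine lt_of_lt_of_le ?_ (log_triDelta_div_le_triFreeEnergy (2 * m + 1) n)
  rw [div_lt_div_iff₀ (by positivity) (by positivity)]
  push_cast
  calc log (triDelta m n) * ((2 * m + 1 + 1) * (n + 1))
      = 2 * log (triDelta m n) * ((m + 1) * (n + 1)) := by ring
    _ < log (triDelta (2 * m + 1) n) * ((m + 1) * (n + 1)) :=
      mul_lt_mul_of_pos_right (two_mul_log_triDelta_lt m hn) (by positivity)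

lemma triFreeEnergy_lt_log_triDelta_div {m n : ℕ} (hm : 0 < m) (hn : 0 < n) :
    triFreeEnergy < log (triDelta m n) / (m * n) := by
  refine (triFreeEnergy_le_log_triDelta_div (Nat.mul_pos two_pos hm)
    (Nat.mul_pos two_pos hn)).trans_lt ?_
  rw [div_lt_div_iff₀ (by positivity) (by positivity)]
  push_cast
  calc log (triDelta (2 * m) (2 * n)) * (m * n)
      < 4 * log (triDelta m n) * (m * n) :=
        mul_lt_mul_of_pos_right (log_triDelta_two_mul_lt hm hn) (by positivity)
    _ = log (triDelta m n) * (2 * m * (2 * n)) := by ring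

lemma log_triDelta_div_le_triFreeEnergy_mul {m n : ℕ} (hm : 0 < m) (hn : 0 < n) :
    log (triDelta m n) / (m * n) ≤ triFreeEnergy * ((1 + 1 / m) * (1 + 1 / n)) := by
  calc log (triDelta m n) / (m * n)
      = log (triDelta m n) / ((m + 1) * (n + 1)) * ((1 + 1 / m) * (1 + 1 / n)) := by
        field_simp
    _ ≤ triFreeEnergy * ((1 + 1 / m) * (1 + 1 / n)) := by
        gcongr
        exact log_triDelta_div_le_triFreeEnergy m n

lemma tendsto_log_triDelta_div :
    Tendsto (fun p : ℕ × ℕ => log (triDelta p.1 p.2) / ((p.1 : ℝ) * (p.2 : ℝ))) atTop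
      (𝓝 triFreeEnergy) := by
  have hinv : Tendsto (fun k : ℕ => 1 + 1 / (k : ℝ)) atTop (𝓝 1) := by
    simpa using (tendsto_const_nhds (x := (1 : ℝ))).add tendsto_one_div_atTop_nhds_zero_nat
  have hupper : Tendsto
      (fun p : ℕ × ℕ => triFreeEnergy * ((1 + 1 / (p.1 : ℝ)) * (1 + 1 / (p.2 : ℝ)))) atTop
      (𝓝 triFreeEnergy) := by
    rw [← prod_atTop_atTop_eq]
    simpa using tendsto_const_nhds.mul ((hinv.comp tendsto_fst).mul (hinv.comp tendsto_snd))
  have hpos : ∀ᶠ p : ℕ × ℕ in atTop, 0 < p.1 ∧ 0 < p.2 :=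
    (eventually_ge_atTop (1, 1)).mono fun p hp => ⟨hp.1, hp.2⟩
  refine tendsto_of_tendsto_of_tendsto_of_le_of_le' tendsto_const_nhds hupper ?_ ?_
  · filter_upwards [hpos] with p hp using triFreeEnergy_le_log_triDelta_div hp.1 hp.2
  · filter_upwards [hpos] with p hp using log_triDelta_div_le_triFreeEnergy_mul hp.1 hp.2

theorem tri_free_energy_exists :
    ∃ fΔ : ℝ,
      (∀ m n : ℕ, 0 < m → 0 < n →
        Real.log (triDelta m n) / (((m : ℝ) + 1) * ((n : ℝ) + 1)) < fΔ ∧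
        fΔ < Real.log (triDelta m n) / ((m : ℝ) * (n : ℝ))) ∧
      Tendsto (fun p : ℕ × ℕ =>
          Real.log (triDelta p.1 p.2) / ((p.1 : ℝ) * (p.2 : ℝ)))
        atTop (𝓝 fΔ) :=
  ⟨triFreeEnergy, fun m _ hm hn =>
    ⟨log_triDelta_div_lt_triFreeEnergy m hn, triFreeEnergy_lt_log_triDelta_div hm hn⟩,
    tendsto_log_triDelta_div⟩
end

section
/- For all integers m ≥ 2 and n ≥ 1, one has N(m,n) ≤ Γ(m+1,n) ≤ N(m+1,n): every independent set of the m×n grid graph, extended by an empty column, yields an independent set of the (m+1)×n twisted cylindrical grid graph (injectively), and every independent set of the (m+1)×n twisted cylindrical grid graph is an independent set of the (m+1)×n grid graph (embedded via the row-by-row linear ordering of the vertices). -/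
open SimpleGraph Filter Real Topology

/-- The `m × n` twisted cylindrical grid graph: vertices `0, …, m*n - 1`, with
`i` and `j` adjacent iff `|i - j| = 1` or `|i - j| = m`. -/
noncomputable def twistGrid (m n : ℕ) : SimpleGraph (Fin (m * n)) :=
  SimpleGraph.fromRel (fun i j => i.val + 1 = j.val ∨ i.val + m = j.val)

/-- `Γ(m,n)`: number of independent sets of the `m × n` twisted cylindrical grid graph. -/
noncomputable def twistGamma (m n : ℕ) : ℕ := numIndep (twistGrid m n)

lemma eq_and_eq_of_add_mul_eq_add_mul {M a b a' b' : ℕ} (ha : a < M) (ha' : a' < M)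
    (h : a + M * b = a' + M * b') : a = a' ∧ b = b' := by
  have hM : 0 < M := by omega
  obtain ⟨hb, ha⟩ := (Nat.div_mod_unique hM).2 ⟨h, ha⟩
  obtain ⟨hb', ha'⟩ := (Nat.div_mod_unique hM).2 ⟨rfl, ha'⟩
  exact ⟨ha.symm.trans ha', hb.symm.trans hb'⟩

def rowMajor (m n : ℕ) : Fin m × Fin n ≃ Fin (m * n) :=
  (Equiv.prodComm _ _).trans (finProdFinEquiv.trans (finCongr (Nat.mul_comm n m)))

@[simp]
lemma rowMajor_val {m n : ℕ} (p : Fin m × Fin n) : (rowMajor m n p : ℕ) = p.1 + m * p.2 := by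
  simp [rowMajor]

@[simps]
def rowMajorHom (m n : ℕ) : (pathGraph m □ pathGraph n) →g twistGrid m n where
  toFun := rowMajor m n
  map_rel' {p q} h := by
    refine (fromRel_adj _ _ _).2 ⟨(rowMajor m n).injective.ne h.ne, ?_⟩
    simp only [rowMajor_val]
    rcases h with ⟨hadj, heq⟩ | ⟨hadj, heq⟩ <;> rcases pathGraph_adj.1 hadj with h | h <;>
      rw [Fin.ext_iff] at heq <;> grind

def paddedRowMajor (m n : ℕ) : Fin m × Fin n ↪ Fin ((m + 1) * n) :=
  (Fin.castSuccEmb.prodMap (Function.Embedding.refl _)).trans (rowMajor (m + 1) n).toEmbedding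

@[simp]
lemma paddedRowMajor_val {m n : ℕ} (p : Fin m × Fin n) :
    (paddedRowMajor m n p : ℕ) = p.1 + (m + 1) * p.2 := by
  simp [paddedRowMajor]

lemma boxProd_adj_of_paddedRowMajor_rel {m n : ℕ} {p q : Fin m × Fin n}
    (h : (paddedRowMajor m n p : ℕ) + 1 = paddedRowMajor m n q ∨
      (paddedRowMajor m n p : ℕ) + (m + 1) = paddedRowMajor m n q) :
    (pathGraph m □ pathGraph n).Adj p q := by
  have hp := p.1.isLt
  have hq := q.1.isLt
  simp only [paddedRowMajor_val] at h
  rw [boxProd_adj, pathGraph_adj, pathGraph_adj, Fin.ext_iff, Fin.ext_iff]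
  rcases h with h | h
  · obtain ⟨hi, hj⟩ := eq_and_eq_of_add_mul_eq_add_mul (M := m + 1) (by omega) (by omega)
      (show p.1 + 1 + (m + 1) * p.2 = q.1 + (m + 1) * q.2 by omega)
    omega
  · obtain ⟨hi, hj⟩ := eq_and_eq_of_add_mul_eq_add_mul (M := m + 1) (by omega) (by omega)
      (show p.1 + (m + 1) * (p.2 + 1) = q.1 + (m + 1) * q.2 by rw [mul_add]; omega)
    omega

lemma twistGrid_comap_paddedRowMajor_le (m n : ℕ) :
    (twistGrid (m + 1) n).comap (paddedRowMajor m n) ≤ pathGraph m □ pathGraph n := by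
  intro p q hpq
  rw [comap_adj, twistGrid, fromRel_adj] at hpq
  obtain ⟨-, h | h⟩ := hpq
  · exact boxProd_adj_of_paddedRowMajor_rel h
  · exact (boxProd_adj_of_paddedRowMajor_rel h).symm

lemma boxProd_comap_rowMajor_symm_le (m n : ℕ) :
    (pathGraph m □ pathGraph n).comap (rowMajor m n).symm ≤ twistGrid m n := by
  intro k k' h
  simpa using (rowMajorHom m n).map_adj h

theorem grid_le_twist_le_grid_general (m n : ℕ) :
    gridN m n ≤ twistGamma (m + 1) n ∧ twistGamma (m + 1) n ≤ gridN (m + 1) n :=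
  ⟨numIndep_le_of_comap_le (paddedRowMajor m n) (twistGrid_comap_paddedRowMajor_le m n),
    numIndep_le_of_comap_le (rowMajor (m + 1) n).symm.toEmbedding
      (boxProd_comap_rowMajor_symm_le (m + 1) n)⟩

theorem grid_le_twist_le_grid (m n : ℕ) (hm : 2 ≤ m) (hn : 1 ≤ n) :
    gridN m n ≤ twistGamma (m + 1) n ∧ twistGamma (m + 1) n ≤ gridN (m + 1) n :=
  grid_le_twist_le_grid_general m n
end
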